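/- The synthesised monitors for external and internal choice coincide, ⟦p+q⟧ = ⟦p⊕q⟧; consequently the synthesis is not rejection complete: for p = ā.nil + b.nil we have p ⋢ ā.nil but not rej(ā.nil, ⟦p⟧). -/

import Mathlib

/-! `⟦p + q⟧` and `⟦p ⊕ q⟧` are the same product `⟦p⟧ × ⟦q⟧`. A monitor with `⟦p⟧` (or `end`)
among its conjuncts, run on the server `p`, keeps a conjunct `⟦p'⟧` (or `end`) for the current
server state `p'` at every step, and `⟦p'⟧` is never of the form `no × ⋯ × no`; so `⟦p⟧` never
rejects `p`. As `ā.nil ⊕ b.nil` silently becomes `ā.nil`, the monitor of `ā.nil + b.nil` never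
rejects `ā.nil`. Yet the client `b̄.ok` is satisfied by `ā.nil + b.nil` and deadlocks with
`ā.nil`. -/

/-- Actions: names and co-names. -/
inductive Act : Type where
  | pos : Nat → Act
  | neg : Nat → Act
deriving DecidableEq

/-- Complementation (dual) of actions. -/
def Act.dual : Act → Act
  | .pos n => .neg n
  | .neg n => .pos n

/-- Server contracts. -/
inductive Srv : Type where
  | nil : Srv
  | pre : Act → Srv → Srv
  | ext : Srv → Srv → Srv
  | int : Srv → Srv → Srv
deriving DecidableEq

/-- Client contracts (additionally with success `ok`). -/
inductive Cli : Type where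
  | nil : Cli
  | ok : Cli
  | pre : Act → Cli → Cli
  | ext : Cli → Cli → Cli
  | int : Cli → Cli → Cli
deriving DecidableEq

/-- Server LTS; label `none` is the silent action τ. -/
inductive SStep : Srv → Option Act → Srv → Prop where
  | pre : ∀ (a : Act) (p : Srv), SStep (.pre a p) (some a) p
  | extL : ∀ {p ℓ p'} (q : Srv), SStep p ℓ p' → SStep (.ext p q) ℓ p'
  | extR : ∀ {q ℓ q'} (p : Srv), SStep q ℓ q' → SStep (.ext p q) ℓ q'
  | intL : ∀ (p q : Srv), SStep (.int p q) none p
  | intR : ∀ (p q : Srv), SStep (.int p q) none q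

/-- Client LTS; label `none` is τ.  `ok` and `nil` have no transitions. -/
inductive CStep : Cli → Option Act → Cli → Prop where
  | pre : ∀ (a : Act) (r : Cli), CStep (.pre a r) (some a) r
  | extL : ∀ {r ℓ r'} (s : Cli), CStep r ℓ r' → CStep (.ext r s) ℓ r'
  | extR : ∀ {s ℓ s'} (r : Cli), CStep s ℓ s' → CStep (.ext r s) ℓ s'
  | intL : ∀ (r s : Cli), CStep (.int r s) none r
  | intR : ∀ (r s : Cli), CStep (.int r s) none s

/-- System τ-transitions for a client-server system `r ∥ p`. -/
inductive SysStep : Cli × Srv → Cli × Srv → Prop where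
  | srv : ∀ {p p'} (r : Cli), SStep p none p' → SysStep (r, p) (r, p')
  | cli : ∀ {r r'} (p : Srv), CStep r none r' → SysStep (r, p) (r', p)
  | syn : ∀ {r r' p p' a}, CStep r (some (Act.dual a)) r' → SStep p (some a) p' →
      SysStep (r, p) (r', p')

/-- `Sat p r`: every maximal computation from `r ∥ p` is successful. -/
def Sat (p : Srv) (r : Cli) : Prop :=
  ∀ s q, Relation.ReflTransGen SysStep (r, p) (s, q) →
    (¬ ∃ x, SysStep (s, q) x) → s = Cli.ok

/-- The server (subcontract) preorder. -/
def SrvPre (p q : Srv) : Prop := ∀ r, Sat p r → Sat q r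

/-- Monitor verdicts: acceptance, rejection, inconclusive. -/
inductive Verd : Type where
  | yes : Verd
  | no : Verd
  | stp : Verd
deriving DecidableEq

/-- Monitors. -/
inductive Mon : Type where
  | verd : Verd → Mon
  | act : Act → Mon → Mon
  | nact : Act → Mon → Mon
  | choice : Mon → Mon → Mon
  | conj : Mon → Mon → Mon
deriving DecidableEq

/-- Monitor LTS (on visible actions only); verdicts persist. -/
inductive MStep : Mon → Act → Mon → Prop where
  | verd : ∀ (v : Verd) (a : Act), MStep (.verd v) a (.verd v)
  | act : ∀ (a : Act) (m : Mon), MStep (.act a m) a m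
  | nact : ∀ {b a : Act} (m : Mon), b ≠ a → MStep (.nact a m) b m
  | chL : ∀ {m a m'} (n : Mon), MStep m a m' → MStep (.choice m n) a m'
  | chR : ∀ {n a n'} (m : Mon), MStep n a n' → MStep (.choice m n) a n'
  | conj : ∀ {m a m' n n'}, MStep m a m' → MStep n a n' →
      MStep (.conj m n) a (.conj m' n')

/-- Instrumentation of a monitor over a server: `m ◁ p`. -/
inductive IStep : Mon × Srv → Option Act → Mon × Srv → Prop where
  | mon : ∀ {m p a m' p'}, SStep p (some a) p' → MStep m a m' →
      IStep (m, p) (some a) (m', p')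
  | ter : ∀ {m p a p'}, SStep p (some a) p' → (¬ ∃ m', MStep m a m') →
      IStep (m, p) (some a) (.verd .stp, p')
  | asy : ∀ {p p'} (m : Mon), SStep p none p' → IStep (m, p) none (m, p')

/-- Reachability along monitored computations. -/
def IReach : Mon × Srv → Mon × Srv → Prop :=
  Relation.ReflTransGen (fun x y => ∃ ℓ, IStep x ℓ y)

/-- Rejecting monitor states: conjunctions `no × ⋯ × no` (incl. the single `no`). -/
inductive IsRej : Mon → Prop where
  | no : IsRej (.verd .no)
  | conj : ∀ {m n}, IsRej m → IsRej n → IsRej (.conj m n)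

/-- `Rej p m`: some monitored computation from `m ◁ p` reaches a rejecting state. -/
def Rej (p : Srv) (m : Mon) : Prop :=
  ∃ m' p', IReach (m, p) (m', p') ∧ IsRej m'

/-- Monitor synthesis from a server specification. -/
def synth : Srv → Mon
  | .nil => .verd .stp
  | .pre a p => .choice (.nact a (.verd .no)) (.act a (synth p))
  | .ext p q => .conj (synth p) (synth q)
  | .int p q => .conj (synth p) (synth q)

/-- Traces (finite sequences of visible actions) of a server. -/
inductive STrace : Srv → List Act → Prop where
  | nil : ∀ (p : Srv), STrace p []
  | tau : ∀ {p p' t}, SStep p none p' → STrace p' t → STrace p t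
  | act : ∀ {p a p' t}, SStep p (some a) p' → STrace p' t → STrace p (a :: t)

/-- Traces of a monitored system. -/
inductive ITrace : Mon × Srv → List Act → Prop where
  | nil : ∀ (x : Mon × Srv), ITrace x []
  | tau : ∀ {x y t}, IStep x none y → ITrace y t → ITrace x t
  | act : ∀ {x a y t}, IStep x (some a) y → ITrace y t → ITrace x (a :: t)

/-- Weak visible transition: τ-steps followed by a visible action. -/
def WAct (p : Srv) (a : Act) (p' : Srv) : Prop :=
  ∃ p₀, Relation.ReflTransGen (fun x y => SStep x none y) p p₀ ∧ SStep p₀ (some a) p'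

theorem synth_ext_eq_synth_int (p q : Srv) : synth (.ext p q) = synth (.int p q) := rfl

theorem Act.dual_involutive : Function.Involutive Act.dual := by
  intro a
  cases a <;> rfl

theorem CStep.pre_inv {x : Act} {r r' : Cli} {ℓ : Option Act} (h : CStep (.pre x r) ℓ r') :
    ℓ = some x ∧ r' = r := by
  cases h
  exact ⟨rfl, rfl⟩

theorem sat_ok (p : Srv) : Sat p .ok := by
  suffices h : ∀ x, Relation.ReflTransGen SysStep (.ok, p) x → x.1 = .ok from
    fun s q hreach _ => h _ hreach
  intro x hx
  induction hx with
  | refl => rfl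
  | tail _ hstep ih =>
    cases hstep with
    | srv => exact ih
    | cli _ hc => cases ih; cases hc
    | syn hc => cases ih; cases hc

theorem Sat.of_forall_step {p : Srv} {r : Cli} (hlive : ∃ x, SysStep (r, p) x)
    (hstep : ∀ r' p', SysStep (r, p) (r', p') → Sat p' r') : Sat p r := by
  intro s q hreach hstuck
  rcases hreach.cases_head with h | ⟨⟨r', p'⟩, hfirst, hrest⟩
  · exact absurd (h ▸ hlive) hstuck
  · exact hstep r' p' hfirst s q hrest hstuck

theorem not_sat_of_stuck {p : Srv} {r : Cli} (hstuck : ¬ ∃ x, SysStep (r, p) x)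
    (hr : r ≠ .ok) : ¬ Sat p r :=
  fun h => hr (h r p .refl hstuck)

theorem sat_pre_dual_ok {p p' : Srv} {a : Act} (hstable : ∀ p'', ¬ SStep p none p'')
    (hready : SStep p (some a) p') : Sat p (.pre a.dual .ok) := by
  refine Sat.of_forall_step ⟨_, .syn (.pre _ _) hready⟩ fun r' p'' hstep => ?_
  cases hstep with
  | srv _ hτ => exact absurd hτ (hstable _)
  | cli _ hc => cases (CStep.pre_inv hc).1
  | syn hc => exact (CStep.pre_inv hc).2 ▸ sat_ok _

theorem not_sat_pre_dual_ok {c a : Act} (hca : c ≠ a) (p : Srv) :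
    ¬ Sat (.pre c p) (.pre a.dual .ok) := by
  refine not_sat_of_stuck ?_ Cli.noConfusion
  rintro ⟨x, hstep⟩
  cases hstep with
  | srv _ hτ => cases hτ
  | cli _ hc => cases (CStep.pre_inv hc).1
  | syn hc hs =>
    cases hs
    exact hca (Act.dual_involutive.injective (Option.some_injective _ (CStep.pre_inv hc).1))

theorem not_srvPre_ext_pre {c a : Act} (hca : c ≠ a) (p q p' : Srv) :
    ¬ SrvPre (.ext (.pre c p) (.pre a q)) (.pre c p') := by
  have hstable : ∀ p'', ¬ SStep (.ext (.pre c p) (.pre a q)) none p'' := by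
    intro _ h
    cases h with
    | extL _ h => cases h
    | extR _ h => cases h
  exact fun h => not_sat_pre_dual_ok hca p' (h _ (sat_pre_dual_ok hstable (.extR _ (.pre a q))))

theorem synth_not_isRej (p : Srv) : ¬ IsRej (synth p) := by
  induction p with
  | nil | pre => rintro ⟨⟩
  | ext p q ihp _ | int p q ihp _ =>
    intro h
    cases h with
    | conj hp _ => exact ihp hp

inductive Tracks : Mon → Srv → Prop where
  | self : ∀ (p : Srv), Tracks (synth p) p
  | conjL : ∀ {m p} (n : Mon), Tracks m p → Tracks (.conj m n) p
  | conjR : ∀ {n p} (m : Mon), Tracks n p → Tracks (.conj m n) p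
  | stp : ∀ (p : Srv), Tracks (.verd .stp) p

namespace Tracks

theorem not_isRej {m : Mon} {p : Srv} (h : Tracks m p) : ¬ IsRej m := by
  induction h with
  | self p => exact synth_not_isRej p
  | conjL _ _ ih =>
    intro hr
    cases hr with
    | conj hm _ => exact ih hm
  | conjR _ _ ih =>
    intro hr
    cases hr with
    | conj _ hn => exact ih hn
  | stp => rintro ⟨⟩

theorem synth_of_silent {p p' : Srv} (h : SStep p none p') : Tracks (synth p) p' := by
  generalize hℓ : (none : Option Act) = ℓ at h
  induction h with
  | pre => cases hℓ
  | extL _ _ ih => exact .conjL _ (ih hℓ)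
  | extR _ _ ih => exact .conjR _ (ih hℓ)
  | intL p q => exact .conjL _ (.self p)
  | intR p q => exact .conjR _ (.self q)

theorem synth_of_visible {p p' : Srv} {a : Act} {m' : Mon} (hp : SStep p (some a) p')
    (hm : MStep (synth p) a m') : Tracks m' p' := by
  generalize hℓ : some a = ℓ at hp
  induction hp generalizing m' with
  | pre b p =>
    cases hℓ
    cases hm with
    | chL _ hno =>
      cases hno with
      | nact _ hne => exact absurd rfl hne
    | chR _ hyes =>
      cases hyes
      exact .self p
  | extL _ _ ih =>
    cases hm with
    | conj hl _ => exact .conjL _ (ih hl hℓ)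
  | extR _ _ ih =>
    cases hm with
    | conj _ hr => exact .conjR _ (ih hr hℓ)
  | intL | intR => cases hℓ

theorem of_silent {m : Mon} {p p' : Srv} (h : Tracks m p) (hp : SStep p none p') :
    Tracks m p' := by
  induction h with
  | self p => exact synth_of_silent hp
  | conjL n _ ih => exact .conjL n (ih hp)
  | conjR m _ ih => exact .conjR m (ih hp)
  | stp => exact .stp p'

theorem of_visible {m m' : Mon} {p p' : Srv} {a : Act} (h : Tracks m p)
    (hp : SStep p (some a) p') (hm : MStep m a m') : Tracks m' p' := by
  induction h generalizing m' with
  | self p => exact synth_of_visible hp hm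
  | conjL n _ ih =>
    cases hm with
    | conj hl _ => exact .conjL _ (ih hp hl)
  | conjR m _ ih =>
    cases hm with
    | conj _ hr => exact .conjR _ (ih hp hr)
  | stp =>
    cases hm
    exact .stp p'

theorem of_iStep {x y : Mon × Srv} {ℓ : Option Act} (h : Tracks x.1 x.2) (hstep : IStep x ℓ y) :
    Tracks y.1 y.2 := by
  cases hstep with
  | mon hp hm => exact h.of_visible hp hm
  | ter => exact .stp _
  | asy _ hp => exact h.of_silent hp

theorem not_rej {m : Mon} {p : Srv} (h : Tracks m p) : ¬ Rej p m := by
  rintro ⟨m', p', hreach, hrej⟩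
  have hinv : ∀ y, IReach (m, p) y → Tracks y.1 y.2 := by
    intro y hy
    induction hy with
    | refl => exact h
    | tail _ hstep ih => exact ih.of_iStep hstep.choose_spec
  exact (hinv _ hreach).not_isRej hrej

end Tracks

theorem Rej.of_silent {p p' : Srv} {m : Mon} (hp : SStep p none p') (h : Rej p' m) : Rej p m := by
  obtain ⟨m', p'', hreach, hrej⟩ := h
  exact ⟨m', p'', .head ⟨none, .asy m hp⟩ hreach, hrej⟩

theorem not_rej_synth (p : Srv) : ¬ Rej p (synth p) :=
  (Tracks.self p).not_rej

/-- The synthesised monitors for external and internal choice coincide;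
consequently the synthesis is not rejection complete: for
`p = ā.nil + b.nil` we have `p ⋢ ā.nil` but not `rej(ā.nil, ⟦p⟧)`. -/
theorem synthesis_not_complete :
    (∀ p q : Srv, synth (.ext p q) = synth (.int p q))
    ∧ ¬ SrvPre (.ext (.pre (.neg 0) .nil) (.pre (.pos 1) .nil)) (.pre (.neg 0) .nil)
    ∧ ¬ Rej (.pre (.neg 0) .nil)
        (synth (.ext (.pre (.neg 0) .nil) (.pre (.pos 1) .nil))) := by
  refine ⟨synth_ext_eq_synth_int, not_srvPre_ext_pre (by decide) _ _ _, ?_⟩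
  rw [synth_ext_eq_synth_int]
  exact fun h => not_rej_synth _ (h.of_silent (.intL _ _))
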